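/- For every natural number n with n ≡ 0 (mod 3) or n ≡ 1 (mod 3), the integer 1 + 3·2^(4+20n) is not a prime number. -/

import Mathlib

/-! Since `2 ^ 60 ≡ 1` modulo both `7` and `61`, divisibility of `1 + 3 * 2 ^ e` by either prime
depends only on `e mod 60`. For `n = 3k` the exponent is `4 + 60k` and `7 ∣ 1 + 3 * 2 ^ 4 = 49`;
for `n = 3k + 1` it is `24 + 60k` and `61 ∣ 1 + 3 * 2 ^ 24`. -/

theorem Nat.dvd_one_add_mul_pow_add_mul {a c m p r : ℕ} (ha : a ^ m ≡ 1 [MOD p])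
    (hr : p ∣ 1 + c * a ^ r) (k : ℕ) : p ∣ 1 + c * a ^ (r + m * k) := by
  have hpow : a ^ (r + m * k) ≡ a ^ r [MOD p] := by
    simpa [pow_add, pow_mul] using (ha.pow k).mul_left (a ^ r)
  exact (((hpow.mul_left c).add_left 1).dvd_iff dvd_rfl).mpr hr

theorem Nat.not_prime_one_add_mul_pow_add_mul {a c m p r : ℕ} (ha₀ : 0 < a)
    (ha : a ^ m ≡ 1 [MOD p]) (hp : 2 ≤ p) (hr : p ∣ 1 + c * a ^ r) (hlt : p < 1 + c * a ^ r)
    (k : ℕ) : ¬ (1 + c * a ^ (r + m * k)).Prime := by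
  refine Nat.not_prime_of_dvd_of_lt (Nat.dvd_one_add_mul_pow_add_mul ha hr k) hp ?_
  have hmono : a ^ r ≤ a ^ (r + m * k) := Nat.pow_le_pow_right ha₀ (Nat.le_add_right _ _)
  calc p < 1 + c * a ^ r := hlt
    _ ≤ 1 + c * a ^ (r + m * k) := by gcongr

theorem stmt8 (n : ℕ) (h : n % 3 = 0 ∨ n % 3 = 1) : ¬ Nat.Prime (1 + 3 * 2 ^ (4 + 20 * n)) := by
  obtain ⟨k, rfl | rfl⟩ : ∃ k, n = 3 * k ∨ n = 3 * k + 1 := ⟨n / 3, by omega⟩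
  · rw [show 4 + 20 * (3 * k) = 4 + 60 * k by ring]
    exact Nat.not_prime_one_add_mul_pow_add_mul (p := 7) two_pos (by decide) (by norm_num)
      (by norm_num) (by norm_num) k
  · rw [show 4 + 20 * (3 * k + 1) = 24 + 60 * k by ring]
    exact Nat.not_prime_one_add_mul_pow_add_mul (p := 61) two_pos (by decide) (by norm_num)
      (by norm_num) (by norm_num) k
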